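/- Let c > 0 and b ≥ 0, and let f(t) = t * log((t+1)/t) for t > 0. If t > 0 satisfies c·t − b ≤ f(t), then t ≤ 1/(e^c − 1) + b/(1 − e^{−c}). -/

import Mathlib

/-! Since log lies below its tangent at `exp c`, `log y ≤ c + y * exp (-c) - 1`. Taking
`y = (t + 1) / t` bounds `t * log ((t + 1) / t)` by `c * t - (1 - exp (-c)) * t + exp (-c)`, so
`c * t - b ≤ t * log ((t + 1) / t)` forces `(1 - exp (-c)) * t ≤ b + exp (-c)`. -/

open Real

lemma Real.log_le_add_mul_exp_neg_sub_one (c : ℝ) {y : ℝ} (hy : 0 < y) :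
    log y ≤ c + y * exp (-c) - 1 := by
  have h := log_le_sub_one_of_pos (mul_pos hy (exp_pos (-c)))
  rw [log_mul hy.ne' (exp_pos _).ne', log_exp] at h
  linarith

lemma Real.mul_log_add_one_div_le (c : ℝ) {t : ℝ} (ht : 0 < t) :
    t * log ((t + 1) / t) ≤ c * t - (1 - exp (-c)) * t + exp (-c) := by
  have h := mul_le_mul_of_nonneg_left
    (log_le_add_mul_exp_neg_sub_one c (y := (t + 1) / t) (by positivity)) ht.le
  calc t * log ((t + 1) / t) ≤ t * (c + (t + 1) / t * exp (-c) - 1) := h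
    _ = c * t - (1 - exp (-c)) * t + exp (-c) := by field_simp; ring

lemma Real.exp_neg_div_one_sub_exp_neg (c : ℝ) :
    exp (-c) / (1 - exp (-c)) = 1 / (exp c - 1) := by
  have hc : exp c ≠ 0 := (exp_pos c).ne'
  rw [exp_neg, ← one_div, one_sub_div hc, div_div_div_cancel_right₀ hc]

theorem lemma4_convexity_bound_general (c b t : ℝ) (hc : 0 < c) (ht : 0 < t)
    (h : c * t - b ≤ t * Real.log ((t + 1) / t)) :
    t ≤ 1 / (Real.exp c - 1) + b / (1 - Real.exp (-c)) := by
  have hpos : 0 < 1 - exp (-c) := by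
    linarith [exp_lt_one_iff.mpr (neg_neg_of_pos hc)]
  have hlin : (1 - exp (-c)) * t ≤ exp (-c) + b := by
    linarith [mul_log_add_one_div_le c ht]
  rwa [← exp_neg_div_one_sub_exp_neg, ← add_div, le_div_iff₀ hpos, mul_comm]

theorem lemma4_convexity_bound (c b t : ℝ) (hc : 0 < c) (hb : 0 ≤ b) (ht : 0 < t)
    (h : c * t - b ≤ t * Real.log ((t + 1) / t)) :
    t ≤ 1 / (Real.exp c - 1) + b / (1 - Real.exp (-c)) :=
  lemma4_convexity_bound_general c b t hc ht h
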